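/- Asymptotic noncoherent bound: Let σ > 0 and for x ∈ ℂ let P_x = 𝒩_ℂ(0, |x|² + σ²). Then limsup over |ξ| → ∞ of ( sup over Borel D ⊆ ℝ² of d(P_ξ(D) ‖ P_0(D)) ) / |ξ|² ≤ 1/(e·σ²), which is strictly less than 1/σ². -/

import Mathlib

/-!
Put `w = σ²`, `r = ‖ξ‖²`, `p = P_ξ(D)` and `q = P_0(D)`. For `t ≥ 0` split `D` along the disc
`‖z‖² ≤ t (r + w)`: outside it `P_ξ` has mass `e^{-t}`, inside it the density of `P_ξ` is at most
`e^{r t / w}` times that of `P_0`. Hence `p ≤ e^{-t} + e^{r t / w} q`, and likewise for `Dᶜ`.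
For `q ≤ 1/2` (otherwise pass to `Dᶜ`) the term `(1-p) log((1-p)/(1-q))` is at most `log 2`,
while `t = L - log p` gives `p log (p/q) ≤ -log (1 - e^{-L}) + (r/w) (L + p log (1/p))` and
`p log (1/p) ≤ 1/e`. Dividing by `r → ∞` and then letting `L → 0` leaves `1/(e σ²)`.
-/

open MeasureTheory ProbabilityTheory Complex
open scoped ENNReal NNReal

/-- Circularly symmetric complex Gaussian measure `𝒩_ℂ(m, v)` on `ℂ ≅ ℝ²`:
the product of two real Gaussians with means `Re m`, `Im m` and variance `v/2` each. -/
noncomputable def cgauss (m : ℂ) (v : ℝ) : Measure ℂ :=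
  Measure.map Complex.measurableEquivRealProd.symm
    ((gaussianReal m.re (v / 2).toNNReal).prod (gaussianReal m.im (v / 2).toNNReal))

/-- Binary relative entropy `d(p‖q)`, i.e. the Kullback–Leibler divergence between
`Bernoulli(p)` and `Bernoulli(q)`, with the conventions `0·log 0 = 0` and
`d(p‖q) = +∞` if `q ∈ {0,1}` and `p ≠ q`. -/
noncomputable def bre (p q : ℝ) : ℝ≥0∞ :=
  if (q = 0 ∨ q = 1) ∧ p ≠ q then ⊤
  else ENNReal.ofReal (p * Real.log (p / q) + (1 - p) * Real.log ((1 - p) / (1 - q)))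

open Real Set Filter
open scoped Topology

namespace Real

lemma nonpos_of_forall_le_exp_neg {p : ℝ} (h : ∀ t, 0 ≤ t → p ≤ exp (-t)) : p ≤ 0 :=
  ge_of_tendsto tendsto_exp_neg_atTop_nhds_zero
    ((eventually_ge_atTop 0).mono fun t ht => h t ht)

lemma neg_log_one_sub_exp_neg_nonneg {L : ℝ} (hL : 0 < L) : 0 ≤ -log (1 - exp (-L)) :=
  neg_nonneg.2 (log_nonpos (sub_nonneg.2 (exp_le_one_iff.2 (by linarith)))
    (sub_le_self _ (exp_pos _).le))

lemma negMulLog_le_exp_neg_one {p : ℝ} (hp : 0 < p) : negMulLog p ≤ exp (-1) := by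
  simpa [negMulLog, exp_neg, exp_log hp, mul_comm] using mul_exp_neg_le_exp_neg_one (-log p)

lemma mul_log_div_le_log_two {x y : ℝ} (hx0 : 0 ≤ x) (hx1 : x ≤ 1) (hy : 1 / 2 ≤ y) :
    x * log (x / y) ≤ log 2 := by
  rcases hx0.eq_or_lt with rfl | hx
  · simpa using log_nonneg one_le_two
  have hlog_y : -log y ≤ log 2 := by
    rw [← log_inv]
    exact log_le_log (by positivity) (by rw [inv_le_comm₀ (by linarith) two_pos]; linarith)
  have hlog_x : x * log x ≤ 0 := mul_nonpos_of_nonneg_of_nonpos hx.le (log_nonpos hx.le hx1)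
  calc x * log (x / y) = x * log x + x * -log y := by
        rw [log_div hx.ne' (by linarith)]; ring
    _ ≤ x * log 2 := by nlinarith
    _ ≤ log 2 := mul_le_of_le_one_left (log_nonneg one_le_two) hx1

lemma mul_log_div_le_of_forall_le {k p q L : ℝ} (hk : 0 ≤ k) (hp0 : 0 < p) (hp1 : p ≤ 1)
    (hq : 0 < q) (hL : 0 < L) (h : ∀ t, 0 ≤ t → p ≤ exp (-t) + exp (k * t) * q) :
    p * log (p / q) ≤ -log (1 - exp (-L)) + k * (L + exp (-1)) := by
  have hε : exp (-L) < 1 := exp_lt_one_iff.2 (by linarith)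
  have hlog_p : log p ≤ 0 := log_nonpos hp0.le hp1
  have hgap := neg_log_one_sub_exp_neg_nonneg hL
  -- with `t = L - log p` the tail term `e^{-t}` is the fraction `e^{-L}` of `p`
  have hmass : (1 - exp (-L)) * p ≤ exp (k * (L - log p)) * q := by
    have := h (L - log p) (by linarith)
    rw [neg_sub, exp_sub, exp_log hp0, div_eq_mul_inv, ← exp_neg] at this
    linarith
  have hratio : log (p / q) ≤ -log (1 - exp (-L)) + k * (L - log p) := by
    have := log_le_log (by have := exp_pos (-L); positivity) hmass
    rw [log_mul (by linarith) hp0.ne', log_mul (exp_pos _).ne' hq.ne', log_exp] at this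
    rw [log_div hp0.ne' hq.ne']
    linarith
  calc p * log (p / q) ≤ p * (-log (1 - exp (-L))) + k * (p * L + negMulLog p) := by
        rw [negMulLog]
        nlinarith
    _ ≤ 1 * (-log (1 - exp (-L))) + k * (1 * L + exp (-1)) := by
        gcongr
        exact negMulLog_le_exp_neg_one hp0
    _ = -log (1 - exp (-L)) + k * (L + exp (-1)) := by ring

lemma integrable_mul_exp_neg_sq_div {v : ℝ} (hv : 0 < v) :
    Integrable fun r : ℝ => r * rexp (-r ^ 2 / v) := by
  simpa [neg_div, div_eq_inv_mul] using integrable_mul_exp_neg_mul_sq (inv_pos.2 hv)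

lemma integral_Ioi_mul_exp_neg_sq_div {v : ℝ} (hv : 0 < v) (a : ℝ) :
    ∫ r in Ioi a, r * rexp (-r ^ 2 / v) = v / 2 * rexp (-a ^ 2 / v) := by
  have hderiv : ∀ x ∈ Ici a,
      HasDerivAt (fun r => -(v / 2) * rexp (-r ^ 2 / v)) (x * rexp (-x ^ 2 / v)) x := by
    intro x _
    have hinner : HasDerivAt (fun r : ℝ => -r ^ 2 / v) (-(2 * x) / v) x := by
      simpa using (hasDerivAt_pow 2 x).neg.div_const v
    refine (hinner.exp.const_mul (-(v / 2))).congr_deriv ?_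
    field_simp
  have hlim : Tendsto (fun r => -(v / 2) * rexp (-r ^ 2 / v)) atTop (𝓝 (-(v / 2) * 0)) := by
    refine (tendsto_exp_atBot.comp ?_).const_mul _
    exact (tendsto_neg_atTop_atBot.comp (tendsto_pow_atTop two_ne_zero)).atBot_div_const hv
  rw [integral_Ioi_of_hasDerivAt_of_tendsto' hderiv
    (integrable_mul_exp_neg_sq_div hv).integrableOn hlim]
  ring

end Real

section BinaryRelativeEntropy

variable {k p q L : ℝ}

lemma eq_zero_of_forall_le_exp_mul_zero (hp : 0 ≤ p)
    (h : ∀ t, 0 ≤ t → p ≤ rexp (-t) + rexp (k * t) * 0) : p = 0 :=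
  le_antisymm (Real.nonpos_of_forall_le_exp_neg fun t ht => by simpa using h t ht) hp

lemma binaryKL_le_of_forall_le (hk : 0 ≤ k) (hL : 0 < L) (hp0 : 0 ≤ p) (hp1 : p ≤ 1)
    (hq0 : 0 ≤ q) (hq1 : q ≤ 1)
    (h : ∀ t, 0 ≤ t → p ≤ rexp (-t) + rexp (k * t) * q)
    (hc : ∀ t, 0 ≤ t → 1 - p ≤ rexp (-t) + rexp (k * t) * (1 - q)) :
    p * Real.log (p / q) + (1 - p) * Real.log ((1 - p) / (1 - q)) ≤
      -Real.log (1 - rexp (-L)) + k * (L + rexp (-1)) + Real.log 2 := by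
  wlog hq : q ≤ 1 / 2 generalizing p q
  · have := this (by linarith) (by linarith) (by linarith) (by linarith) hc
      (by simpa only [sub_sub_cancel] using h) (by linarith)
    simp only [sub_sub_cancel] at this
    linarith
  have hbound : 0 ≤ -Real.log (1 - rexp (-L)) + k * (L + rexp (-1)) :=
    add_nonneg (Real.neg_log_one_sub_exp_neg_nonneg hL) (by positivity)
  have hfirst : p * Real.log (p / q) ≤ -Real.log (1 - rexp (-L)) + k * (L + rexp (-1)) := by
    rcases hq0.eq_or_lt with rfl | hq0
    · rw [eq_zero_of_forall_le_exp_mul_zero hp0 h, zero_mul]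
      exact hbound
    rcases hp0.eq_or_lt with rfl | hp0
    · rwa [zero_mul]
    exact mul_log_div_le_of_forall_le hk hp0 hp1 hq0 hL h
  linarith [mul_log_div_le_log_two (x := 1 - p) (y := 1 - q) (by linarith) (by linarith)
    (by linarith)]

lemma bre_le_of_forall_le (hk : 0 ≤ k) (hL : 0 < L) (hp0 : 0 ≤ p) (hp1 : p ≤ 1)
    (hq0 : 0 ≤ q) (hq1 : q ≤ 1)
    (h : ∀ t, 0 ≤ t → p ≤ rexp (-t) + rexp (k * t) * q)
    (hc : ∀ t, 0 ≤ t → 1 - p ≤ rexp (-t) + rexp (k * t) * (1 - q)) :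
    bre p q ≤ ENNReal.ofReal (-Real.log (1 - rexp (-L)) + k * (L + rexp (-1)) + Real.log 2) := by
  rw [bre, if_neg]
  · exact ENNReal.ofReal_le_ofReal (binaryKL_le_of_forall_le hk hL hp0 hp1 hq0 hq1 h hc)
  rintro ⟨rfl | rfl, hpq⟩
  · exact hpq (eq_zero_of_forall_le_exp_mul_zero hp0 h)
  · have := eq_zero_of_forall_le_exp_mul_zero (p := 1 - p) (by linarith)
      (by simpa only [sub_self] using hc)
    exact hpq (by linarith)

end BinaryRelativeEntropy

section WithDensity

variable {α : Type*} [MeasurableSpace α] {μ : Measure α} {f g : α → ℝ≥0∞} {A S : Set α}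
  {c : ℝ≥0∞}

lemma withDensity_apply_le_compl_add_mul (hA : MeasurableSet A) (hS : MeasurableSet S)
    (hc : c ≠ ⊤) (hfg : ∀ x ∈ A, f x ≤ c * g x) :
    μ.withDensity f S ≤ μ.withDensity f Aᶜ + c * μ.withDensity g S := by
  have hsplit : S ⊆ Aᶜ ∪ (S ∩ A) := fun x hx => by
    by_cases h : x ∈ A
    exacts [Or.inr ⟨hx, h⟩, Or.inl h]
  have hinter : μ.withDensity f (S ∩ A) ≤ c * μ.withDensity g S := by
    rw [withDensity_apply _ (hS.inter hA), withDensity_apply _ hS, ← lintegral_const_mul' _ _ hc]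
    calc ∫⁻ x in S ∩ A, f x ∂μ ≤ ∫⁻ x in S ∩ A, c * g x ∂μ :=
          setLIntegral_mono' (hS.inter hA) fun x hx => hfg x hx.2
      _ ≤ ∫⁻ x in S, c * g x ∂μ := lintegral_mono_set inter_subset_left
  calc μ.withDensity f S ≤ μ.withDensity f (Aᶜ ∪ (S ∩ A)) := measure_mono hsplit
    _ ≤ μ.withDensity f Aᶜ + μ.withDensity f (S ∩ A) := measure_union_le _ _
    _ ≤ μ.withDensity f Aᶜ + c * μ.withDensity g S := by gcongr

end WithDensity

section ComplexGaussian

variable {v w : ℝ}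

noncomputable def cgaussPDFReal (v : ℝ) (z : ℂ) : ℝ := (π * v)⁻¹ * rexp (-‖z‖ ^ 2 / v)

lemma gaussianPDFReal_zero_half (hv : 0 < v) (x : ℝ) :
    gaussianPDFReal 0 (v / 2).toNNReal x = (√(π * v))⁻¹ * rexp (-x ^ 2 / v) := by
  rw [gaussianPDFReal, Real.coe_toNNReal _ (by positivity), sub_zero,
    show 2 * π * (v / 2) = π * v by ring, show 2 * (v / 2) = v by ring]

lemma gaussianPDF_mul_gaussianPDF_zero_half (hv : 0 < v) (p : ℝ × ℝ) :
    gaussianPDF 0 (v / 2).toNNReal p.1 * gaussianPDF 0 (v / 2).toNNReal p.2 =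
      ENNReal.ofReal (cgaussPDFReal v (measurableEquivRealProd.symm p)) := by
  rw [gaussianPDF, gaussianPDF, ← ENNReal.ofReal_mul (gaussianPDFReal_nonneg _ _ _),
    gaussianPDFReal_zero_half hv, gaussianPDFReal_zero_half hv, cgaussPDFReal]
  congr 1
  have hnorm : ‖measurableEquivRealProd.symm p‖ ^ 2 = p.1 ^ 2 + p.2 ^ 2 := by
    rw [show measurableEquivRealProd.symm p = ⟨p.1, p.2⟩ from rfl, Complex.sq_norm,
      normSq_mk, sq, sq]
  have hsqrt : √(π * v) * √(π * v) = π * v := Real.mul_self_sqrt (by positivity)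
  rw [hnorm, mul_mul_mul_comm, ← mul_inv, hsqrt, ← Real.exp_add, neg_add, add_div]

lemma cgauss_zero_eq_withDensity (hv : 0 < v) :
    cgauss 0 v = volume.withDensity fun z => ENNReal.ofReal (cgaussPDFReal v z) := by
  have hv2 : (v / 2).toNNReal ≠ 0 := by simpa using hv
  ext D hD
  have hpre : MeasurableSet (measurableEquivRealProd.symm ⁻¹' D) :=
    measurableEquivRealProd.symm.measurable hD
  rw [cgauss, Measure.map_apply measurableEquivRealProd.symm.measurable hD, zero_re, zero_im,
    gaussianReal_of_var_ne_zero _ hv2, prod_withDensity (measurable_gaussianPDF _ _)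
      (measurable_gaussianPDF _ _), ← Measure.volume_eq_prod, withDensity_apply _ hpre,
    withDensity_apply _ hD, ← volume_preserving_equiv_real_prod.symm.setLIntegral_comp_preimage_emb
      measurableEquivRealProd.symm.measurableEmbedding]
  simp_rw [gaussianPDF_mul_gaussianPDF_zero_half hv]

instance (m : ℂ) (v : ℝ) : IsProbabilityMeasure (cgauss m v) :=
  Measure.isProbabilityMeasure_map measurableEquivRealProd.symm.measurable.aemeasurable

lemma cgauss_toReal_compl (m : ℂ) {D : Set ℂ} (hD : MeasurableSet D) :
    (cgauss m v Dᶜ).toReal = 1 - (cgauss m v D).toReal :=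
  probReal_compl_eq_one_sub hD

lemma cgauss_zero_setOf_lt_norm_sq (hv : 0 < v) {s : ℝ} (hs : 0 ≤ s) :
    cgauss 0 v {z | s < ‖z‖ ^ 2} = ENNReal.ofReal (rexp (-s / v)) := by
  set T : Set ℂ := {z | s < ‖z‖ ^ 2}
  set f : ℝ → ℝ := (Ioi √s).indicator fun y => (π * v)⁻¹ * rexp (-y ^ 2 / v)
  have hT : MeasurableSet T := measurableSet_lt measurable_const (by fun_prop)
  have hf : T.indicator (cgaussPDFReal v) = fun z => f ‖z‖ := by
    ext z
    simp only [T, f, indicator, mem_ofPred_eq, mem_Ioi, Real.sqrt_lt hs (norm_nonneg z),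
      cgaussPDFReal]
  have hyf : (fun y => y ^ (Module.finrank ℝ ℂ - 1) • f y) =
      (Ioi √s).indicator fun y => (π * v)⁻¹ * (y * rexp (-y ^ 2 / v)) := by
    ext y
    simp only [Complex.finrank_real_complex, f, indicator, smul_eq_mul]
    split_ifs <;> ring
  have hint : IntegrableOn (cgaussPDFReal v) T := by
    rw [← integrable_indicator_iff hT, hf, integrable_fun_norm_addHaar, hyf]
    exact ((integrable_mul_exp_neg_sq_div hv).const_mul _).integrableOn.indicator
      measurableSet_Ioi
  rw [cgauss_zero_eq_withDensity hv, withDensity_apply _ hT,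
    ← ofReal_integral_eq_lintegral_ofReal hint
      (.of_forall fun z => by unfold cgaussPDFReal; positivity),
    ← integral_indicator hT, hf, integral_fun_norm_addHaar, hyf,
    setIntegral_indicator measurableSet_Ioi, Ioi_inter_Ioi, sup_eq_right.2 (sqrt_nonneg s),
    integral_const_mul, integral_Ioi_mul_exp_neg_sq_div hv, sq_sqrt hs]
  congr 1
  simp [Measure.real, Complex.finrank_real_complex]
  field_simp

lemma cgaussPDFReal_le_exp_mul (hw : 0 < w) (hwv : w ≤ v) {z : ℂ} {s : ℝ} (hz : ‖z‖ ^ 2 ≤ s) :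
    cgaussPDFReal v z ≤ rexp (s * (w⁻¹ - v⁻¹)) * cgaussPDFReal w z := by
  have hv : 0 < v := hw.trans_le hwv
  have hgap : 0 ≤ w⁻¹ - v⁻¹ := sub_nonneg.2 (inv_anti₀ hw hwv)
  have hexp : -‖z‖ ^ 2 / v ≤ s * (w⁻¹ - v⁻¹) + -‖z‖ ^ 2 / w := by
    have := mul_le_mul_of_nonneg_right hz hgap
    rw [neg_div, neg_div, div_eq_mul_inv, div_eq_mul_inv]
    linarith
  calc cgaussPDFReal v z ≤ (π * w)⁻¹ * rexp (s * (w⁻¹ - v⁻¹) + -‖z‖ ^ 2 / w) := by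
        unfold cgaussPDFReal
        gcongr
    _ = rexp (s * (w⁻¹ - v⁻¹)) * cgaussPDFReal w z := by
        rw [cgaussPDFReal, Real.exp_add]
        ring

lemma cgauss_zero_toReal_le {r : ℝ} (hw : 0 < w) (hr : 0 ≤ r) {D : Set ℂ} (hD : MeasurableSet D)
    {t : ℝ} (ht : 0 ≤ t) :
    (cgauss 0 (r + w) D).toReal ≤ rexp (-t) + rexp (r / w * t) * (cgauss 0 w D).toReal := by
  have hv : 0 < r + w := by linarith
  set s := t * (r + w)
  have hrate : s * (w⁻¹ - (r + w)⁻¹) = r / w * t := by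
    field_simp
    ring
  have htail := cgauss_zero_setOf_lt_norm_sq hv (s := s) (by positivity)
  rw [show -s / (r + w) = -t by simp only [s]; field_simp] at htail
  have hcompl : {z : ℂ | ‖z‖ ^ 2 ≤ s}ᶜ = {z | s < ‖z‖ ^ 2} := by
    ext
    simp
  have hmeas : cgauss 0 (r + w) D ≤
      ENNReal.ofReal (rexp (-t)) + ENNReal.ofReal (rexp (r / w * t)) * cgauss 0 w D := by
    rw [← htail, ← hcompl, ← hrate, cgauss_zero_eq_withDensity hv, cgauss_zero_eq_withDensity hw]
    refine withDensity_apply_le_compl_add_mul (measurableSet_le (by fun_prop) measurable_const)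
      hD ENNReal.ofReal_ne_top fun z hz => ?_
    rw [← ENNReal.ofReal_mul (exp_pos _).le]
    exact ENNReal.ofReal_le_ofReal (cgaussPDFReal_le_exp_mul hw (by linarith) hz)
  have := ENNReal.toReal_mono (by finiteness) hmeas
  rwa [ENNReal.toReal_add (by finiteness) (by finiteness), ENNReal.toReal_mul,
    ENNReal.toReal_ofReal (exp_pos _).le, ENNReal.toReal_ofReal (exp_pos _).le] at this

end ComplexGaussian

lemma bre_cgauss_le {r w L : ℝ} (hw : 0 < w) (hr : 0 ≤ r) (hL : 0 < L) {D : Set ℂ}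
    (hD : MeasurableSet D) :
    bre (cgauss 0 (r + w) D).toReal (cgauss 0 w D).toReal ≤
      ENNReal.ofReal (-Real.log (1 - rexp (-L)) + r / w * (L + rexp (-1)) + Real.log 2) :=
  bre_le_of_forall_le (by positivity) hL ENNReal.toReal_nonneg measureReal_le_one
    ENNReal.toReal_nonneg measureReal_le_one (fun _ ht => cgauss_zero_toReal_le hw hr hD ht)
    fun _ ht => by
      simpa only [cgauss_toReal_compl 0 hD] using cgauss_zero_toReal_le hw hr hD.compl ht

lemma limsup_div_ofReal_le {α : Type*} {l : Filter α} {f : α → ℝ≥0∞} {g : α → ℝ} {C c : ℝ}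
    (hg : Tendsto g l atTop) (hf : ∀ᶠ x in l, f x ≤ ENNReal.ofReal (C + c * g x)) :
    limsup (fun x => f x / ENNReal.ofReal (g x)) l ≤ ENNReal.ofReal c := by
  rcases l.eq_or_neBot with rfl | _
  · simp
  have hlim : Tendsto (fun x => ENNReal.ofReal (C / g x + c)) l (𝓝 (ENNReal.ofReal c)) := by
    simpa using ENNReal.tendsto_ofReal ((tendsto_const_nhds.div_atTop hg).add_const c)
  refine (limsup_le_limsup ?_).trans hlim.limsup_eq.le
  filter_upwards [hf, hg.eventually_gt_atTop 0] with x hfx hgx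
  calc f x / ENNReal.ofReal (g x) ≤ ENNReal.ofReal (C + c * g x) / ENNReal.ofReal (g x) := by
        gcongr
    _ = ENNReal.ofReal (C / g x + c) := by
        rw [← ENNReal.ofReal_div_of_pos hgx]
        congr 1
        field_simp

/-- Asymptotic noncoherent bound: the limsup, as `|ξ| → ∞`, of the best normalized binary
relative entropy achievable by one-bit quantizers on the noncoherent channel is at most
`1/(e·σ²)`, which is strictly less than `1/σ²`. -/
theorem noncoherent_asymptotic_bound (σ : ℝ) (hσ : 0 < σ) :
    Filter.limsup
        (fun ξ : ℂ =>
          (⨆ (D : Set ℂ) (_ : MeasurableSet D),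
              bre ((cgauss 0 (‖ξ‖ ^ 2 + σ ^ 2)) D).toReal
                ((cgauss 0 (σ ^ 2)) D).toReal) /
            ENNReal.ofReal (‖ξ‖ ^ 2))
        (Filter.comap (fun z : ℂ => ‖z‖) Filter.atTop) ≤
      ENNReal.ofReal (1 / (Real.exp 1 * σ ^ 2)) ∧
    ENNReal.ofReal (1 / (Real.exp 1 * σ ^ 2)) < ENNReal.ofReal (1 / σ ^ 2) := by
  have hw : 0 < σ ^ 2 := by positivity
  have hnorm_sq : Tendsto (fun ξ : ℂ => ‖ξ‖ ^ 2) (comap (fun z : ℂ => ‖z‖) atTop) atTop :=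
    (tendsto_pow_atTop two_ne_zero).comp tendsto_comap
  have hlim : Tendsto (fun L => ENNReal.ofReal ((L + rexp (-1)) / σ ^ 2)) (𝓝[>] 0)
      (𝓝 (ENNReal.ofReal (1 / (Real.exp 1 * σ ^ 2)))) := by
    have : Continuous fun L => ENNReal.ofReal ((L + rexp (-1)) / σ ^ 2) :=
      ENNReal.continuous_ofReal.comp (by fun_prop)
    convert (this.tendsto 0).mono_left nhdsWithin_le_nhds using 2
    rw [zero_add, Real.exp_neg]
    field_simp
  refine ⟨ge_of_tendsto hlim (eventually_nhdsWithin_of_forall fun L (hL : 0 < L) => ?_), ?_⟩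
  · refine limsup_div_ofReal_le hnorm_sq (C := -Real.log (1 - rexp (-L)) + Real.log 2)
      (.of_forall fun ξ => iSup₂_le fun D hD => ?_)
    refine (bre_cgauss_le hw (by positivity) hL hD).trans_eq ?_
    congr 1
    ring
  · rw [ENNReal.ofReal_lt_ofReal_iff (by positivity)]
    gcongr
    exact lt_mul_left hw (by linarith [Real.add_one_lt_exp one_ne_zero])
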